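/- Let A ⊆ U be a measurable set of finite measure and F : ℝ^d → ℝ. Suppose m is a competitor in 𝒜(F) minimizing E(A, ·) among all competitors in 𝒜(F), and u' is a competitor in 𝒜(F) minimizing E(Ω(m), ·) among all competitors in 𝒜(F). Then u' also minimizes E(A, ·) among all competitors in 𝒜(F). -/
import Mathlib


open MeasureTheory

noncomputable section

/-- `ℝ^d` as Euclidean space. -/
abbrev Rd (d : ℕ) := EuclideanSpace ℝ (Fin d)

/-- Positivity set of `u` inside `U`. -/
def Omega {d : ℕ} (U : Set (Rd d)) (u : Rd d → ℝ) : Set (Rd d) := {x ∈ U | 0 < u x}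

/-- Dirichlet energy of `u` on `U`. -/
def Dir {d : ℕ} (U : Set (Rd d)) (u : Rd d → ℝ) : ℝ := ∫ x in U, ‖fderiv ℝ u x‖ ^ 2

/-- Alt–Caffarelli one-phase energy. -/
def J {d : ℕ} (U : Set (Rd d)) (u : Rd d → ℝ) : ℝ :=
  Dir U u + (volume (Omega U u)).toReal

/-- Dissipation distance between two sets. -/
def Diss {d : ℕ} (μp μm : ℝ) (V₀ V₁ : Set (Rd d)) : ℝ :=
  μp * (volume (V₁ \ V₀)).toReal + μm * (volume (V₀ \ V₁)).toReal

/-- Augmented energy `E(A, u) = J(u) + Diss(A, Ω(u))`. -/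
def En {d : ℕ} (U : Set (Rd d)) (μp μm : ℝ) (A : Set (Rd d)) (u : Rd d → ℝ) : ℝ :=
  J U u + Diss μp μm A (Omega U u)

/-- `u` is a competitor. -/
structure IsCompetitor {d : ℕ} (U : Set (Rd d)) (u : Rd d → ℝ) : Prop where
  diff : ∀ x ∈ U, DifferentiableAt ℝ u x
  meas : MeasurableSet (Omega U u)
  finVol : volume (Omega U u) < ⊤
  integ : IntegrableOn (fun x => ‖fderiv ℝ u x‖ ^ 2) U volume

/-- Admissible class: Dirichlet condition `u = F` outside `U`. -/
def Adm {d : ℕ} (U : Set (Rd d)) (F : Rd d → ℝ) : Set (Rd d → ℝ) :=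
  {u | ∀ x ∉ U, u x = F x}

/-- Hypothesis (★): gradients agree wherever the functions touch in `U`. -/
def StarHyp {d : ℕ} (U : Set (Rd d)) (u v : Rd d → ℝ) : Prop :=
  ∀ x ∈ U, u x = v x → fderiv ℝ u x = fderiv ℝ v x

/-- `m` is a competitor in `𝒜(F)` minimizing `E(A, ·)` among competitors in `𝒜(F)`. -/
def MinimizesE {d : ℕ} (U : Set (Rd d)) (μp μm : ℝ) (A : Set (Rd d)) (F : Rd d → ℝ)
    (m : Rd d → ℝ) : Prop :=
  IsCompetitor U m ∧ m ∈ Adm U F ∧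
    ∀ w, IsCompetitor U w → w ∈ Adm U F → En U μp μm A m ≤ En U μp μm A w

lemma toReal_tri {x y z : ENNReal} (h : x ≤ y + z) (hy : y ≠ ⊤) (hz : z ≠ ⊤) :
    x.toReal ≤ y.toReal + z.toReal := by
  rw [← ENNReal.toReal_add hy hz]
  exact ENNReal.toReal_mono (by simp [ENNReal.add_ne_top, hy, hz]) h

lemma diff_tri {α : Type*} (A B C : Set α) : C \ A ⊆ (C \ B) ∪ (B \ A) := by
  intro x hx
  by_cases h : x ∈ B
  · exact Or.inr ⟨h, hx.2⟩
  · exact Or.inl ⟨hx.1, h⟩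

theorem stmt_13 {d : ℕ} (hd : 1 ≤ d) (U : Set (Rd d)) (hUopen : IsOpen U)
    (hUbdd : Bornology.IsBounded U) (μp μm : ℝ) (hμp : 0 < μp) (hμm : 0 < μm)
    (A : Set (Rd d)) (hA : MeasurableSet A) (hAU : A ⊆ U) (hAv : volume A < ⊤)
    (F : Rd d → ℝ) (m u' : Rd d → ℝ)
    (hm : MinimizesE U μp μm A F m)
    (hu' : MinimizesE U μp μm (Omega U m) F u') :
    MinimizesE U μp μm A F u' := by
  obtain ⟨hmC, hmA, hmMin⟩ := hm
  obtain ⟨huC, huA, huMin⟩ := hu'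
  refine ⟨huC, huA, fun w hwC hwA => ?_⟩
  have h1 : En U μp μm (Omega U m) u' ≤ En U μp μm (Omega U m) m := huMin m hmC hmA
  have h0 : Diss μp μm (Omega U m) (Omega U m) = 0 := by simp [Diss]
  have h2 : J U u' + Diss μp μm (Omega U m) (Omega U u') ≤ J U m := by
    simp only [En, h0, add_zero] at h1; linarith
  have hfm : volume (Omega U m) ≠ ⊤ := hmC.finVol.ne
  have hfu : volume (Omega U u') ≠ ⊤ := huC.finVol.ne
  have ha : (volume (Omega U u' \ A)).toReal ≤
      (volume (Omega U u' \ Omega U m)).toReal + (volume (Omega U m \ A)).toReal := by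
    refine toReal_tri (le_trans (measure_mono (diff_tri A (Omega U m) (Omega U u')))
      (measure_union_le _ _)) ?_ ?_
    · exact ((measure_mono Set.diff_subset).trans_lt huC.finVol).ne
    · exact ((measure_mono Set.diff_subset).trans_lt hmC.finVol).ne
  have hb : (volume (A \ Omega U u')).toReal ≤
      (volume (A \ Omega U m)).toReal + (volume (Omega U m \ Omega U u')).toReal := by
    refine toReal_tri (le_trans (measure_mono (diff_tri (Omega U u') (Omega U m) A))
      (measure_union_le _ _)) ?_ ?_
    · exact ((measure_mono Set.diff_subset).trans_lt hAv).ne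
    · exact ((measure_mono Set.diff_subset).trans_lt hmC.finVol).ne
  have htri : Diss μp μm A (Omega U u') ≤
      Diss μp μm A (Omega U m) + Diss μp μm (Omega U m) (Omega U u') := by
    unfold Diss
    nlinarith [mul_le_mul_of_nonneg_left ha hμp.le, mul_le_mul_of_nonneg_left hb hμm.le]
  have h3 : En U μp μm A u' ≤ En U μp μm A m := by
    simp only [En]; linarith
  exact le_trans h3 (hmMin w hwC hwA)
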